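/- arXiv:1601.01099 — 6 statements merged into one kernel-verified Lean document; each statement's English description precedes it below -/
import Mathlib

section
/- Let F(x) = ∏_{i=0}^{m+n} (x - q^i). Then for each s with 0 ≤ s ≤ m+n, the derivative satisfies F'(q^s) = (q;q)_s (q;q)_{m+n} / ( q^s · (q^{-(m+n)};q)_s ). -/
/-!
Differentiating the product gives `F'(q^s) = ∏_{i ≠ s} (q^s - q^i)`. Writing `N = s + t`, the
factors with `i > s` give `q^(s t) (q;q)_t`, while those with `i < s`, reflected, pair off with the
factors of `(q^(-N);q)_s` into `(q;q)_s` times the top `s` factors of `(q;q)_N`; the leftover powers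
of `q` cancel against `q^s`.
-/

open scoped BigOperators

/-- The finite q-Pochhammer symbol `(z;q)_s = ∏_{k=0}^{s-1} (1 - q^k z)`. -/
noncomputable def qPoch (q z : ℂ) (s : ℕ) : ℂ := ∏ k ∈ Finset.range s, (1 - q ^ k * z)

open Finset

theorem deriv_prod_sub_apply_of_mem {𝕜 ι : Type*} [NontriviallyNormedField 𝕜]
    [DecidableEq ι] {u : Finset ι} (f : ι → 𝕜) {j : ι} (hj : j ∈ u) :
    deriv (fun x => ∏ i ∈ u, (x - f i)) (f j) = ∏ i ∈ u.erase j, (f j - f i) := by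
  have hderiv := HasDerivAt.fun_finsetProd (u := u) (x := f j)
    fun i _ => (hasDerivAt_id' (f j)).sub_const (f i)
  rw [hderiv.deriv, sum_eq_single j (fun i _ hij => ?_) (absurd hj)]
  · simp
  · simpa using
      prod_eq_zero (f := fun k => f j - f k) (mem_erase.mpr ⟨Ne.symm hij, hj⟩) (sub_self _)

theorem prod_erase_range_add_add_one {M : Type*} [CommMonoid M] (g : ℕ → M) (s t : ℕ) :
    ∏ i ∈ (range (s + t + 1)).erase s, g i =
      (∏ i ∈ range s, g i) * ∏ i ∈ range t, g (s + 1 + i) := by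
  have hsplit : (range (s + t + 1)).erase s = range s ∪ Ico (s + 1) (s + t + 1) := by
    ext i
    simp only [mem_erase, mem_range, mem_union, mem_Ico]
    omega
  have hdisj : Disjoint (range s) (Ico (s + 1) (s + t + 1)) :=
    disjoint_left.mpr fun i hi hi' => by simp only [mem_range, mem_Ico] at hi hi'; omega
  rw [hsplit, prod_union hdisj, prod_Ico_eq_prod_range, show s + t + 1 - (s + 1) = t by omega]

theorem qPoch_add (q z : ℂ) (a b : ℕ) :
    qPoch q z (a + b) = qPoch q z a * qPoch q (q ^ a * z) b := by
  simp only [qPoch, prod_range_add, pow_add, mul_assoc, mul_left_comm]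

theorem qPoch_ne_zero {q z : ℂ} {s : ℕ} (h : ∀ k < s, q ^ k * z ≠ 1) : qPoch q z s ≠ 0 :=
  prod_ne_zero_iff.mpr fun k hk => sub_ne_zero.mpr (h k (mem_range.mp hk)).symm

theorem prod_range_pow_sub_pow_add (q : ℂ) (s t : ℕ) :
    ∏ i ∈ range t, (q ^ s - q ^ (s + 1 + i)) = (q ^ s) ^ t * qPoch q q t := by
  calc ∏ i ∈ range t, (q ^ s - q ^ (s + 1 + i))
        = ∏ i ∈ range t, (q ^ s * (1 - q ^ i * q)) := prod_congr rfl fun _ _ => by ring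
    _ = (q ^ s) ^ t * qPoch q q t := by rw [prod_mul_distrib, prod_const, card_range, qPoch]

theorem prod_range_pow_sub_pow_mul_qPoch {q : ℂ} (hq : q ≠ 0) (s t : ℕ) :
    (∏ i ∈ range s, (q ^ s - q ^ i)) * qPoch q (q ^ (-((s + t : ℕ) : ℤ))) s *
        (q ^ (t + 1)) ^ s =
      qPoch q q s * qPoch q (q ^ t * q) s := by
  -- `(q^s - q^(s-1-k)) (1 - q^(k-s-t)) q^(t+1) = (1 - q^(k+1)) (1 - q^(s+t-k))` for each `k < s`
  have hconst : (q ^ (t + 1)) ^ s = ∏ _k ∈ range s, q ^ (t + 1) := by simp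
  simp only [qPoch]
  rw [← prod_range_reflect (fun i => q ^ s - q ^ i), hconst,
    ← prod_range_reflect (fun k => 1 - q ^ k * (q ^ t * q)), ← prod_mul_distrib,
    ← prod_mul_distrib, ← prod_mul_distrib]
  refine prod_congr rfl fun k hk => ?_
  obtain ⟨a, rfl⟩ := Nat.exists_eq_add_of_lt (mem_range.mp hk)
  rw [zpow_neg, zpow_natCast, show k + a + 1 - 1 - k = a by omega]
  field_simp
  ring

/-- For `F(x) = ∏_{i=0}^{m+n} (x - q^i)` one has
`F'(q^s) = (q;q)_s (q;q)_{m+n} / (q^s (q^{-(m+n)};q)_s)`. -/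
theorem stmt3 (q : ℂ) (hq0 : q ≠ 0) (hq1 : ∀ k : ℕ, 0 < k → q ^ k ≠ 1)
    (m n s : ℕ) (hs : s ≤ m + n) :
    deriv (fun x : ℂ => ∏ i ∈ Finset.range (m + n + 1), (x - q ^ i)) (q ^ s) =
      qPoch q q s * qPoch q q (m + n) /
        (q ^ s * qPoch q (q ^ (-((m + n : ℕ) : ℤ))) s) := by
  obtain ⟨t, ht⟩ := Nat.exists_eq_add_of_le hs
  rw [ht]
  have hD : qPoch q (q ^ (-((s + t : ℕ) : ℤ))) s ≠ 0 := by
    refine qPoch_ne_zero fun k (hk : k < s) h1 => hq1 (s + t - k) (by omega) ?_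
    rw [zpow_neg, zpow_natCast, mul_inv_eq_one₀ (pow_ne_zero _ hq0)] at h1
    rw [pow_sub₀ q hq0 (by omega), ← h1, mul_inv_cancel₀ (pow_ne_zero _ hq0)]
  rw [eq_div_iff (mul_ne_zero (pow_ne_zero _ hq0) hD),
    deriv_prod_sub_apply_of_mem (fun i => q ^ i) (mem_range.mpr (by omega : s < s + t + 1)),
    prod_erase_range_add_add_one, prod_range_pow_sub_pow_add, add_comm s t, qPoch_add,
    add_comm t s]
  linear_combination qPoch q q t * prod_range_pow_sub_pow_mul_qPoch hq0 s t
end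

section
/- Jacobi's interpolation formula: given distinct points x_0, ..., x_{m+n} and values ψ_0, ..., ψ_{m+n} (all nonzero), define u_s = ψ_s / F'(x_s) where F(x) = ∏_{i=0}^{m+n}(x - x_i). Then the polynomials P(x) = F(x) · det[ ∑_{s=0}^{m+n} u_s x_s^{i+j} / (x - x_s) ]_{i,j=0}^{n} and Q(x) = det[ ∑_{s=0}^{m+n} u_s x_s^{i+j} (x - x_s) ]_{i,j=0}^{n-1} have degrees at most m and n respectively, and (assuming Q(x_s) ≠ 0 for all s) satisfy ψ_s = P(x_s)/Q(x_s) for s = 0, 1, ..., m+n. -/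
/-!
Let `F = ∏ (X - x_s)` and `G_s = F / (X - x_s)`. Clearing denominators, `F^(n+1)` times the
matrix of `P` is the Hankel moment matrix `A` with polynomial weights `u_s G_s`, so
`P = det A / F^n`, and everything rests on the behaviour of `A` near a node `x_r`. There all
weights vanish except `u_r G_r(x_r) = ψ_r`, so `A = (X - x_r) B + ψ_r w wᵀ` with
`w = (x_r^j)_j`, and the determinant of such a rank-one perturbation is `(X - x_r)^n` times a
polynomial with value `ψ_r ∑_i x_r^i det(B(x_r) with row i replaced by w)` at `x_r`. The
factors `(X - x_r)^n` are pairwise coprime, so `F^n ∣ det A`, and comparing degrees gives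
`deg P ≤ m`. Finally the row operations `R_i ← R_i - x_r R_(i-1)` turn that bordered sum into
the `n × n` moment determinant with weights `γ_s (x_r - x_s)^2`, which is `F'(x_r)^n Q(x_r)`;
hence `F'(x_r)^n P(x_r) = ψ_r F'(x_r)^n Q(x_r)`.
-/

namespace Matrix

variable {R : Type*} [CommRing R]

theorem det_add_vecMulVec {ι : Type*} [Fintype ι] [DecidableEq ι]
    (M : Matrix ι ι R) (c w : ι → R) :
    (M + vecMulVec c w).det = M.det + ∑ i, c i * (M.updateRow i w).det := by
  set f := (detRowAlternating : (ι → R) [⋀^ι]→ₗ[R] R)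
  set v : ι → ι → R := fun i => c i • w
  set m : ι → ι → R := fun i => M i
  -- In the multilinear expansion of the rows `c i • w + M i`, a term that takes the row `w`
  -- at two indices vanishes.
  have hvanish : ∀ s : Finset ι, s ∉ insert ∅ (Finset.univ.image singleton) →
      f (s.piecewise v m) = 0 := by
    intro s hs
    obtain ⟨i, hi, j, hj, hij⟩ : s.Nontrivial := by
      by_contra h
      rcases (Set.not_nontrivial_iff.mp h).eq_empty_or_singleton with h0 | ⟨a, ha⟩
      · exact hs (Finset.mem_insert.mpr (Or.inl (Finset.coe_eq_empty.mp h0)))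
      · exact hs (Finset.mem_insert_of_mem (Finset.mem_image.mpr
          ⟨a, Finset.mem_univ _, (Finset.coe_eq_singleton.mp ha).symm⟩))
    set g := s.piecewise (fun _ => w) m
    have hg : s.piecewise v m = s.piecewise (fun i => c i • g i) g := by
      funext a
      by_cases ha : a ∈ s <;> simp [g, v, ha]
    rw [hg]
    have hgij : g i = g j := by
      simp only [g, Finset.piecewise_eq_of_mem _ _ _ hi, Finset.piecewise_eq_of_mem _ _ _ hj]
    exact (f.toMultilinearMap.map_piecewise_smul c g s).trans
      (by simp [f.map_eq_zero_of_eq g hgij hij])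
  have hrows : M + vecMulVec c w = of (v + m) := by
    ext i j
    simp [v, m, vecMulVec_apply, add_comm]
  change f _ = f m + _
  rw [hrows]
  change f (v + m) = _
  rw [f.map_add_univ, ← Finset.sum_subset (Finset.subset_univ _) fun s _ hs => hvanish s hs,
    Finset.sum_insert (by simp), Finset.sum_image fun _ _ _ _ h => Finset.singleton_injective h]
  simp [f, v, m, Finset.piecewise_singleton]
  rfl

theorem det_smul_updateRow {k : ℕ} (t : R) (M : Matrix (Fin (k + 1)) (Fin (k + 1)) R)
    (i : Fin (k + 1)) (w : Fin (k + 1) → R) :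
    ((t • M).updateRow i w).det = t ^ k * (M.updateRow i w).det := by
  have h : (t • M).updateRow i w
      = diagonal (Function.update (fun _ => t) i 1) * M.updateRow i w := by
    ext a b
    rcases eq_or_ne a i with rfl | h <;> simp [diagonal_mul, updateRow_apply, *]
  rw [h, det_mul, det_diagonal, Fin.prod_univ_succAbove _ i]
  simp

theorem det_smul_add_vecMulVec {k : ℕ} (t : R) (M : Matrix (Fin (k + 1)) (Fin (k + 1)) R)
    (c w : Fin (k + 1) → R) :
    (t • M + vecMulVec c w).det = t ^ k * (t * M.det + ∑ i, c i * (M.updateRow i w).det) := by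
  simp only [det_add_vecMulVec, det_smul, Fintype.card_fin, det_smul_updateRow, mul_add,
    Finset.mul_sum]
  ring_nf

theorem det_add_vecMulVec_single_zero {k : ℕ} (N : Matrix (Fin (k + 1)) (Fin (k + 1)) R) :
    (N + vecMulVec (Pi.single 0 1) (Pi.single 0 1)).det
      = N.det + (N.submatrix Fin.succ Fin.succ).det := by
  have hminor : (N.updateRow 0 (Pi.single 0 1)).det = (N.submatrix Fin.succ Fin.succ).det := by
    rw [det_succ_row_zero, Fin.sum_univ_succ]
    simp only [updateRow_self, Pi.single_eq_same, Pi.single_apply, Fin.succ_ne_zero, if_false,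
      mul_zero, zero_mul, Finset.sum_const_zero, add_zero, Fin.val_zero, pow_zero, one_mul]
    rfl
  rw [det_add_vecMulVec, Fintype.sum_eq_single 0 fun i hi => by simp [hi], hminor]
  simp

end Matrix

open Matrix

section Moments

variable {R : Type*} [CommRing R] {ι : Type*} [Fintype ι]

def powerVec (k : ℕ) (z : R) : Fin k → R := fun j => z ^ (j : ℕ)

def momentMatrix (k : ℕ) (γ y : ι → R) : Matrix (Fin k) (Fin k) R :=
  of fun i j => ∑ s, γ s * y s ^ ((i : ℕ) + (j : ℕ))

theorem momentMatrix_eq_sum_vecMulVec (k : ℕ) (γ y : ι → R) :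
    momentMatrix k γ y = ∑ s, γ s • vecMulVec (powerVec k (y s)) (powerVec k (y s)) := by
  ext i j
  simp [momentMatrix, powerVec, Matrix.sum_apply, vecMulVec_apply, pow_add]

theorem momentMatrix_map {S : Type*} [CommRing S] (f : R →+* S) (k : ℕ) (γ y : ι → R) :
    (momentMatrix k γ y).map f = momentMatrix k (f ∘ γ) (f ∘ y) := by
  ext i j
  simp [momentMatrix]

theorem momentMatrix_mul_left (k : ℕ) (c : R) (γ y : ι → R) :
    momentMatrix k (fun s => c * γ s) y = c • momentMatrix k γ y := by
  ext i j
  simp [momentMatrix, Finset.mul_sum, mul_assoc]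

def differenceMatrix (n : ℕ) (a : R) : Matrix (Fin (n + 1)) (Fin (n + 1)) R :=
  of (Fin.cons (Pi.single 0 1) fun i => Pi.single i.succ 1 - a • Pi.single i.castSucc 1)

theorem det_differenceMatrix (n : ℕ) (a : R) : (differenceMatrix n a).det = 1 := by
  rw [det_of_isLowerTriangular]
  · refine Finset.prod_eq_one fun i _ => ?_
    cases i using Fin.cases with
    | zero => simp [differenceMatrix]
    | succ i => simp [differenceMatrix, (Fin.castSucc_lt_succ (i := i)).ne']
  · intro i j hij
    change i < j at hij
    cases i using Fin.cases with
    | zero => simp [differenceMatrix, hij.ne']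
    | succ i =>
      simp [differenceMatrix, hij.ne', ((Fin.castSucc_lt_succ (i := i)).trans hij).ne']

theorem differenceMatrix_mulVec_powerVec (n : ℕ) (a z : R) :
    differenceMatrix n a *ᵥ powerVec (n + 1) z = Fin.cons 1 ((z - a) • powerVec n z) := by
  ext i
  cases i using Fin.cases with
  | zero => simp [differenceMatrix, mulVec, powerVec]
  | succ i =>
    simp only [differenceMatrix, mulVec, of_apply, Fin.cons_succ]
    rw [sub_dotProduct, smul_dotProduct, single_dotProduct, single_dotProduct]
    simp [powerVec, pow_succ]
    ring

/-- The sum on the left is `det (B + w wᵀ) - det B` for the power vector `w` of `a`;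
conjugating by `differenceMatrix n a` sends `w` to `e₀`, so this difference becomes the minor
of `B` after the row and column operations. -/
theorem sum_pow_mul_det_updateRow_momentMatrix (n : ℕ) (γ y : ι → R) (a : R) :
    ∑ i : Fin (n + 1),
        a ^ (i : ℕ) * ((momentMatrix (n + 1) γ y).updateRow i (powerVec (n + 1) a)).det
      = (momentMatrix n (fun s => γ s * (a - y s) ^ 2) y).det := by
  set E := differenceMatrix n a
  set B := momentMatrix (n + 1) γ y
  set v : R → Fin (n + 1) → R := fun z => Fin.cons 1 ((z - a) • powerVec n z)
  have hcongr : ∀ N, (E * N * Eᵀ).det = N.det := by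
    simp [det_mul, E, det_differenceMatrix]
  have hE : ∀ z, E * vecMulVec (powerVec (n + 1) z) (powerVec (n + 1) z) * Eᵀ
      = vecMulVec (v z) (v z) := by
    intro z
    rw [mul_vecMulVec, vecMulVec_mul, vecMul_transpose, differenceMatrix_mulVec_powerVec]
  have hva : v a = Pi.single 0 1 := by
    ext i
    cases i using Fin.cases <;> simp [v]
  have hminor : (E * B * Eᵀ).submatrix Fin.succ Fin.succ
      = momentMatrix n (fun s => γ s * (a - y s) ^ 2) y := by
    simp only [B, momentMatrix_eq_sum_vecMulVec, Matrix.mul_sum, Matrix.sum_mul, Matrix.mul_smul,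
      Matrix.smul_mul, hE]
    ext i j
    simp [v, Matrix.sum_apply, vecMulVec_apply, powerVec]
    exact Finset.sum_congr rfl fun s _ => by ring
  have key := det_add_vecMulVec B (powerVec (n + 1) a) (powerVec (n + 1) a)
  rw [← hcongr (_ + _), Matrix.mul_add, Matrix.add_mul, hE a, hva, det_add_vecMulVec_single_zero,
    hcongr, hminor] at key
  simpa [powerVec] using (add_left_cancel key).symm

end Moments

open Polynomial

section PolynomialMoments

variable {R : Type*} [CommRing R] {ι : Type*} [Fintype ι]

theorem natDegree_det_le_of_forall_le {κ : Type*} [Fintype κ] [DecidableEq κ] {d : ℕ}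
    (M : Matrix κ κ R[X]) (h : ∀ i j, (M i j).natDegree ≤ d) :
    M.det.natDegree ≤ Fintype.card κ * d := by
  rw [det_apply']
  refine natDegree_sum_le_of_forall_le _ _ fun σ _ => (natDegree_mul_le).trans ?_
  rw [natDegree_intCast, zero_add]
  refine (natDegree_prod_le _ _).trans ?_
  exact (Finset.sum_le_sum fun i _ => h (σ i) i).trans
    (by rw [Finset.sum_const, Finset.card_univ, smul_eq_mul])

theorem natDegree_det_momentMatrix_le {k d : ℕ} (γ : ι → R[X]) (y : ι → R)
    (h : ∀ s, (γ s).natDegree ≤ d) :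
    (momentMatrix k γ (C ∘ y)).det.natDegree ≤ k * d := by
  refine (natDegree_det_le_of_forall_le _ fun i j =>
    natDegree_sum_le_of_forall_le _ _ fun s _ => ?_).trans_eq (by rw [Fintype.card_fin])
  rw [Function.comp_apply, ← C_pow]
  exact (natDegree_mul_C_le _ _).trans (h s)

theorem eval_det_momentMatrix (k : ℕ) (γ : ι → R[X]) (y : ι → R) (t : R) :
    (momentMatrix k γ (C ∘ y)).det.eval t
      = (momentMatrix k (fun s => (γ s).eval t) y).det := by
  rw [← coe_evalRingHom, RingHom.map_det, RingHom.mapMatrix_apply, momentMatrix_map]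
  congr 2
  ext s
  simp

theorem exists_det_momentMatrix_eq_X_sub_C_pow_mul [DecidableEq ι] (n : ℕ) (q : ι → R[X])
    (y : ι → R) (r : ι) (b : R) :
    ∃ H : R[X], (momentMatrix (n + 1) ((X - C (y r)) • q + Pi.single r (C b)) (C ∘ y)).det
        = (X - C (y r)) ^ n * H ∧
      H.eval (y r) = b * (momentMatrix n (fun s => (q s).eval (y r) * (y r - y s) ^ 2) y).det := by
  set B := momentMatrix (n + 1) q (C ∘ y)
  set w := powerVec (n + 1) (C (y r))
  have hsplit : momentMatrix (n + 1) ((X - C (y r)) • q + Pi.single r (C b)) (C ∘ y)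
      = (X - C (y r)) • B + vecMulVec (C b • w) w := by
    refine Matrix.ext fun i j => ?_
    simp only [B, w, momentMatrix, of_apply, Matrix.add_apply, Matrix.smul_apply, smul_eq_mul,
      vecMulVec_apply, Pi.add_apply, Pi.smul_apply, powerVec, Function.comp_apply, add_mul,
      Finset.sum_add_distrib, Finset.mul_sum, Pi.single_apply, ite_mul, zero_mul,
      Finset.sum_ite_eq', Finset.mem_univ, if_true, pow_add, mul_assoc]
  refine ⟨(X - C (y r)) * B.det + ∑ i, (C b • w) i * (B.updateRow i w).det,
    by rw [hsplit, det_smul_add_vecMulVec], ?_⟩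
  have hrow : ∀ i, (B.updateRow i w).det.eval (y r) = ((momentMatrix (n + 1)
      (fun s => (q s).eval (y r)) y).updateRow i (powerVec (n + 1) (y r))).det := by
    intro i
    rw [← coe_evalRingHom, RingHom.map_det, RingHom.mapMatrix_apply, map_updateRow,
      momentMatrix_map]
    simp only [Function.comp_def, coe_evalRingHom, eval_C, w, powerVec, eval_pow]
    rfl
  simp only [eval_add, eval_mul, eval_sub, eval_X, eval_C, sub_self, zero_mul, zero_add,
    eval_finsetSum, hrow]
  rw [← sum_pow_mul_det_updateRow_momentMatrix, Finset.mul_sum]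
  refine Finset.sum_congr rfl fun i _ => ?_
  simp [w, powerVec, mul_assoc]

end PolynomialMoments

open Lagrange

section Jacobi

variable {K : Type*} [Field K] {ι : Type*} [Fintype ι] [DecidableEq ι]

/-- `F(X)^(n+1)` times the matrix of `P`, with `F(X) / (X - x_s)` written as the nodal
polynomial of the other nodes. -/
noncomputable def jacobiDet (n : ℕ) (x u : ι → K) : K[X] :=
  (momentMatrix (n + 1) (fun s => C (u s) * nodal (Finset.univ.erase s) x) (C ∘ x)).det

theorem natDegree_jacobiDet_le (n : ℕ) (x u : ι → K) :
    (jacobiDet n x u).natDegree ≤ (n + 1) * (Fintype.card ι - 1) := by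
  refine natDegree_det_momentMatrix_le _ _ fun s => (natDegree_C_mul_le _ _).trans ?_
  simp [Finset.card_erase_of_mem]

theorem eval_jacobiDet (n : ℕ) (x u : ι → K) {t : K} (ht : ∀ s, t ≠ x s) :
    (jacobiDet n x u).eval t
      = (nodal Finset.univ x).eval t ^ (n + 1) *
        (momentMatrix (n + 1) (fun s => u s / (t - x s)) x).det := by
  have hweights : (fun s => (C (u s) * nodal (Finset.univ.erase s) x).eval t)
      = fun s => (nodal Finset.univ x).eval t * (u s / (t - x s)) := by
    funext s
    rw [eval_mul, eval_C, nodal_eq_mul_nodal_erase (Finset.mem_univ s), eval_mul]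
    field_simp [sub_ne_zero.mpr (ht s)]
    simp
  rw [jacobiDet, eval_det_momentMatrix, hweights, momentMatrix_mul_left, det_smul,
    Fintype.card_fin]

theorem exists_jacobiDet_eq_X_sub_C_pow_mul (n : ℕ) (x u : ι → K) (r : ι) :
    ∃ H : K[X], jacobiDet n x u = (X - C (x r)) ^ n * H ∧
      H.eval (x r) = u r * (nodal (Finset.univ.erase r) x).eval (x r) ^ (n + 1) *
        (momentMatrix n (fun s => u s * (x r - x s)) x).det := by
  set c := (nodal (Finset.univ.erase r) x).eval (x r)
  have hdvd : ∀ s, X - C (x r) ∣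
      C (u s) * nodal (Finset.univ.erase s) x - (Pi.single r (C (u r * c)) : ι → K[X]) s := by
    intro s
    rw [dvd_iff_isRoot]
    rcases eq_or_ne s r with rfl | hs
    · simp [c]
    · simp [hs, eval_nodal_at_node (Finset.mem_erase.mpr ⟨hs.symm, Finset.mem_univ r⟩)]
  choose q hq using hdvd
  have hweights : (fun s => C (u s) * nodal (Finset.univ.erase s) x)
      = (X - C (x r)) • q + Pi.single r (C (u r * c)) := by
    funext s
    rw [Pi.add_apply, Pi.smul_apply, smul_eq_mul, ← hq s, sub_add_cancel]
  have hq_eval : ∀ s, (q s).eval (x r) * (x r - x s) ^ 2 = c * (u s * (x r - x s)) := by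
    intro s
    rcases eq_or_ne s r with rfl | hs
    · simp
    have hqs : (X - C (x s)) * q s = C (u s) * nodal (Finset.univ.erase r) x := by
      refine mul_left_cancel₀ (X_sub_C_ne_zero (x r)) ?_
      calc (X - C (x r)) * ((X - C (x s)) * q s)
          = (X - C (x s)) * (C (u s) * nodal (Finset.univ.erase s) x) := by
            rw [← mul_assoc, mul_comm (X - C (x r)), mul_assoc, ← hq s,
              Pi.single_eq_of_ne hs, sub_zero]
        _ = (X - C (x r)) * (C (u s) * nodal (Finset.univ.erase r) x) := by
            rw [mul_left_comm, ← nodal_eq_mul_nodal_erase (Finset.mem_univ s),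
              nodal_eq_mul_nodal_erase (Finset.mem_univ r), mul_left_comm]
    have := congrArg (eval (x r)) hqs
    simp only [eval_mul, eval_sub, eval_X, eval_C] at this
    linear_combination (x r - x s) * this
  obtain ⟨H, hH, hH_eval⟩ := exists_det_momentMatrix_eq_X_sub_C_pow_mul n q x r (u r * c)
  refine ⟨H, by rw [jacobiDet, hweights, hH], ?_⟩
  rw [hH_eval, funext hq_eval, momentMatrix_mul_left, det_smul, Fintype.card_fin]
  ring

theorem nodal_pow_dvd_jacobiDet (n : ℕ) {x : ι → K} (hx : Function.Injective x)
    (u : ι → K) :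
    nodal Finset.univ x ^ n ∣ jacobiDet n x u := by
  rw [nodal, ← Finset.prod_pow]
  refine Finset.prod_dvd_of_coprime (fun a _ b _ hab => (pairwise_coprime_X_sub_C hx hab).pow)
    fun r _ => ?_
  obtain ⟨H, hH, -⟩ := exists_jacobiDet_eq_X_sub_C_pow_mul n x u r
  exact Dvd.intro H hH.symm

variable {n : ℕ} {x u : ι → K} {p : K[X]}

theorem natDegree_le_of_jacobiDet_eq {m : ℕ} (hcard : Fintype.card ι = m + n + 1)
    (hp : jacobiDet n x u = nodal Finset.univ x ^ n * p) : p.natDegree ≤ m := by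
  rcases eq_or_ne p 0 with rfl | hp0
  · simp
  have hdeg := natDegree_jacobiDet_le n x u
  rw [hp, natDegree_mul (pow_ne_zero _ nodal_ne_zero) hp0, natDegree_pow, natDegree_nodal,
    Finset.card_univ, hcard] at hdeg
  refine Nat.le_of_add_le_add_left (hdeg.trans_eq ?_)
  rw [Nat.add_sub_cancel]
  ring

theorem eval_of_jacobiDet_eq (hp : jacobiDet n x u = nodal Finset.univ x ^ n * p) {t : K}
    (ht : ∀ s, t ≠ x s) :
    p.eval t = (nodal Finset.univ x).eval t *
      (momentMatrix (n + 1) (fun s => u s / (t - x s)) x).det := by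
  have hF : (nodal Finset.univ x).eval t ≠ 0 := eval_nodal_not_at_node fun s _ => ht s
  have h := eval_jacobiDet n x u ht
  rw [hp, eval_mul, eval_pow, pow_succ, mul_assoc] at h
  exact mul_left_cancel₀ (pow_ne_zero n hF) h

theorem eval_node_of_jacobiDet_eq (hx : Function.Injective x)
    (hp : jacobiDet n x u = nodal Finset.univ x ^ n * p) (r : ι) :
    p.eval (x r) = u r * (nodal (Finset.univ.erase r) x).eval (x r) *
      (momentMatrix n (fun s => u s * (x r - x s)) x).det := by
  set G := nodal (Finset.univ.erase r) x
  have hc : G.eval (x r) ≠ 0 := eval_nodal_not_at_node fun s hs h =>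
    (Finset.mem_erase.mp hs).1 (hx h).symm
  obtain ⟨H, hH, hH_eval⟩ := exists_jacobiDet_eq_X_sub_C_pow_mul n x u r
  have hHp : H = G ^ n * p := by
    refine mul_left_cancel₀ (pow_ne_zero n (X_sub_C_ne_zero (x r))) ?_
    rw [← hH, hp, nodal_eq_mul_nodal_erase (Finset.mem_univ r), mul_pow, mul_assoc]
  rw [hHp, eval_mul, eval_pow] at hH_eval
  refine mul_left_cancel₀ (pow_ne_zero n hc) (hH_eval.trans ?_)
  ring

end Jacobi

theorem stmt4_general (m n : ℕ) (x : Fin (m + n + 1) → ℂ) (hx : Function.Injective x)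
    (ψ : Fin (m + n + 1) → ℂ) :
    let u : Fin (m + n + 1) → ℂ :=
      fun s => ψ s / ∏ i ∈ Finset.univ.erase s, (x s - x i)
    let Pe : ℂ → ℂ := fun t =>
      (∏ s, (t - x s)) *
        Matrix.det (Matrix.of fun i j : Fin (n + 1) =>
          ∑ s, u s * (x s) ^ ((i : ℕ) + (j : ℕ)) / (t - x s))
    let Qe : ℂ → ℂ := fun t =>
      Matrix.det (Matrix.of fun i j : Fin n =>
        ∑ s, u s * (x s) ^ ((i : ℕ) + (j : ℕ)) * (t - x s))
    ∃ p qp : Polynomial ℂ, p.degree ≤ m ∧ qp.degree ≤ n ∧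
      (∀ t : ℂ, (∀ s, t ≠ x s) → p.eval t = Pe t) ∧
      (∀ t : ℂ, qp.eval t = Qe t) ∧
      ((∀ s, Qe (x s) ≠ 0) → ∀ s, ψ s = p.eval (x s) / Qe (x s)) := by
  intro u Pe Qe
  obtain ⟨p, hp⟩ := nodal_pow_dvd_jacobiDet n hx u
  have hQe : ∀ t, Qe t = (momentMatrix n (fun s => u s * (t - x s)) x).det := fun t => by
    simp only [Qe, momentMatrix, mul_right_comm]
  refine ⟨p, (momentMatrix n (fun s => C (u s) * (X - C (x s))) (C ∘ x)).det,
    degree_le_of_natDegree_le (natDegree_le_of_jacobiDet_eq (by simp) hp),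
    degree_le_of_natDegree_le ?_, fun t ht => ?_, fun t => ?_, fun hQ s => ?_⟩
  · simpa using natDegree_det_momentMatrix_le (d := 1) _ x fun s =>
      (natDegree_C_mul_le _ _).trans (natDegree_X_sub_C_le _)
  · simp only [eval_of_jacobiDet_eq hp ht, Pe, eval_nodal, momentMatrix, div_mul_eq_mul_div]
  · simp [eval_det_momentMatrix, hQe]
  · have hF' : ∏ i ∈ Finset.univ.erase s, (x s - x i) ≠ 0 :=
      Finset.prod_ne_zero_iff.mpr fun i hi => sub_ne_zero.mpr fun h =>
        (Finset.mem_erase.mp hi).1 (hx h).symm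
    rw [eval_node_of_jacobiDet_eq hx hp, ← hQe, eval_nodal, mul_div_cancel_right₀ _ (hQ s)]
    exact (div_mul_cancel₀ _ hF').symm

/-- Jacobi's interpolation formula: the determinantal expressions
`P(x) = F(x)·det[∑_s u_s x_s^{i+j}/(x-x_s)]` and
`Q(x) = det[∑_s u_s x_s^{i+j}(x-x_s)]` with `u_s = ψ_s/F'(x_s)`
are polynomials of degrees at most `m`, `n` solving the interpolation
problem `ψ_s = P(x_s)/Q(x_s)`. -/
theorem stmt4 (m n : ℕ) (x : Fin (m + n + 1) → ℂ) (hx : Function.Injective x)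
    (ψ : Fin (m + n + 1) → ℂ) (hψ : ∀ s, ψ s ≠ 0) :
    let u : Fin (m + n + 1) → ℂ :=
      fun s => ψ s / ∏ i ∈ Finset.univ.erase s, (x s - x i)
    let Pe : ℂ → ℂ := fun t =>
      (∏ s, (t - x s)) *
        Matrix.det (Matrix.of fun i j : Fin (n + 1) =>
          ∑ s, u s * (x s) ^ ((i : ℕ) + (j : ℕ)) / (t - x s))
    let Qe : ℂ → ℂ := fun t =>
      Matrix.det (Matrix.of fun i j : Fin n =>
        ∑ s, u s * (x s) ^ ((i : ℕ) + (j : ℕ)) * (t - x s))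
    ∃ p qp : Polynomial ℂ, p.degree ≤ m ∧ qp.degree ≤ n ∧
      (∀ t : ℂ, (∀ s, t ≠ x s) → p.eval t = Pe t) ∧
      (∀ t : ℂ, qp.eval t = Qe t) ∧
      ((∀ s, Qe (x s) ≠ 0) → ∀ s, ψ s = p.eval (x s) / Qe (x s)) :=
  stmt4_general m n x hx ψ
end

section
/- Let ψ(x) = ∑_{k≥0} p_k x^k be a formal power series with p_0 = 1 (and p_i = 0 for i < 0). Define the Schur function s_λ by the Jacobi-Trudi formula s_{(λ_1,...,λ_l)} = det( p_{λ_i - i + j} )_{i,j=1}^l. Then the polynomials P(x) = ∑_{i=0}^{m} s_{(m^n, i)} x^i and Q(x) = ∑_{i=0}^{n} s_{((m+1)^i, m^{n-i})} (-x)^i of degrees at most m and n satisfy the Padé condition: the power series ψ(x)·Q(x) − P(x) has vanishing coefficients in degrees 0 through m+n. -/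
open scoped BigOperators

/-- The Schur function given by the Jacobi-Trudi determinant
`s_{(λ_1,…,λ_l)} = det(p_{λ_i - i + j})_{i,j=1}^l`. -/
noncomputable def jacobiTrudi (p : ℤ → ℂ) (l : ℕ) (lam : Fin l → ℕ) : ℂ :=
  Matrix.det (Matrix.of fun i j : Fin l =>
    p (((lam i : ℕ) : ℤ) - ((i : ℕ) : ℤ) + ((j : ℕ) : ℤ)))

/-
Expanding the Jacobi–Trudi determinant of `(m^n, d)` along its last row gives
`∑ᵢ (-1)^i s_{((m+1)^i, m^(n-i))} p_{d-i}`: the cofactors are Jacobi–Trudi determinants of the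
partitions `((m+1)^i, m^(n-i))` read backwards. When `m < d ≤ m + n` the last row repeats row
`n - (d - m)`, so the determinant vanishes.
-/

theorem jacobiTrudi_eq_zero_of_rows_eq (p : ℤ → ℂ) {l : ℕ} (lam : Fin l → ℕ)
    {i i' : Fin l} (hii' : i ≠ i') (h : (lam i : ℤ) - (i : ℕ) = (lam i' : ℤ) - (i' : ℕ)) :
    jacobiTrudi p l lam = 0 :=
  Matrix.det_zero_of_row_eq hii' <| funext fun j => by simp only [Matrix.of_apply, h]

/-- Reversing the order of rows and columns turns this minor into the transposed Jacobi–Trudi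
matrix. -/
theorem det_toeplitz_succAbove (p : ℤ → ℂ) (m n : ℕ) (j : Fin (n + 1)) :
    Matrix.det (Matrix.of fun a b : Fin n => p ((m : ℤ) - (a : ℕ) + (j.succAbove b : ℕ))) =
      jacobiTrudi p n (fun k => if (k : ℕ) < n - j then m + 1 else m) := by
  have hM : (Matrix.of fun a b : Fin n => p ((m : ℤ) - (a : ℕ) + (j.succAbove b : ℕ))) =
      Matrix.submatrix (Matrix.transpose <| Matrix.of fun a b : Fin n =>
          p (((if (a : ℕ) < n - j then m + 1 else m : ℕ) : ℤ) - (a : ℕ) + (b : ℕ)))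
        Fin.revPerm Fin.revPerm := by
    ext ⟨a, ha⟩ ⟨b, hb⟩
    obtain ⟨j, hj⟩ := j
    simp only [Matrix.submatrix_apply, Matrix.transpose_apply, Matrix.of_apply,
      Fin.revPerm_apply, Fin.succAbove, Fin.lt_def, Fin.val_castSucc, Fin.val_rev]
    split_ifs <;> simp only [Fin.val_castSucc, Fin.val_succ] <;> (congr 1; omega)
  rw [jacobiTrudi, hM, Matrix.det_submatrix_equiv_self, Matrix.det_transpose]

theorem jacobiTrudi_rect_append_eq_sum (p : ℤ → ℂ) (m n d : ℕ) :
    jacobiTrudi p (n + 1) (fun k => if (k : ℕ) < n then m else d) =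
      ∑ i ∈ Finset.range (n + 1),
        ((-1 : ℂ) ^ i * jacobiTrudi p n (fun k => if (k : ℕ) < i then m + 1 else m)) *
          p ((d : ℤ) - (i : ℤ)) := by
  rw [jacobiTrudi, Matrix.det_succ_row _ (Fin.last n), ← Finset.sum_range_reflect,
    ← Fin.sum_univ_eq_sum_range]
  refine Finset.sum_congr rfl fun j _ => ?_
  have hj : (j : ℕ) ≤ n := Nat.lt_succ_iff.mp j.is_lt
  have hminor : (Matrix.of fun a b : Fin (n + 1) =>
        p (((if (a : ℕ) < n then m else d : ℕ) : ℤ) - (a : ℕ) + (b : ℕ))).submatrix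
          (Fin.last n).succAbove j.succAbove =
      Matrix.of fun a b : Fin n => p ((m : ℤ) - (a : ℕ) + (j.succAbove b : ℕ)) := by
    ext a b
    simp [Fin.succAbove_last, a.is_lt]
  have hsign : (-1 : ℂ) ^ (n + j) = (-1) ^ (n - j) := by
    rw [show n + (j : ℕ) = (n - j) + 2 * j by omega, pow_add, pow_mul, neg_one_sq, one_pow,
      mul_one]
  rw [hminor, det_toeplitz_succAbove, Matrix.of_apply, Fin.val_last, if_neg (lt_irrefl n),
    hsign, Nat.add_sub_cancel, show (d : ℤ) - n + j = d - ((n - j : ℕ) : ℤ) by omega]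
  ring

theorem jacobiTrudi_rect_append_eq_zero (p : ℤ → ℂ) {m n d : ℕ} (hmd : m < d)
    (hd : d ≤ m + n) :
    jacobiTrudi p (n + 1) (fun k => if (k : ℕ) < n then m else d) = 0 :=
  jacobiTrudi_eq_zero_of_rows_eq p _ (i := ⟨n - (d - m), by omega⟩) (i' := Fin.last n)
    (Fin.ne_of_val_ne (by simp only [Fin.val_last]; omega))
    (by simp only [Fin.val_last, if_neg (lt_irrefl n), if_pos (by omega : n - (d - m) < n)]; omega)

theorem stmt5_general (m n : ℕ) (p : ℤ → ℂ) :
    ∀ d : ℕ, d ≤ m + n →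
      (∑ i ∈ Finset.range (n + 1),
          ((-1 : ℂ) ^ i * jacobiTrudi p n (fun k => if (k : ℕ) < i then m + 1 else m)) *
            p ((d : ℤ) - (i : ℤ))) =
        (if d ≤ m then jacobiTrudi p (n + 1) (fun k => if (k : ℕ) < n then m else d)
          else 0) := by
  intro d hd
  rw [← jacobiTrudi_rect_append_eq_sum]
  split_ifs with hdm
  · rfl
  · exact jacobiTrudi_rect_append_eq_zero p (not_le.mp hdm) hd

/-- The Padé condition: for `ψ(x) = ∑ p_k x^k` with `p_0 = 1`, the polynomials
`P(x) = ∑_{i=0}^m s_{(m^n,i)} x^i` and `Q(x) = ∑_{i=0}^n s_{((m+1)^i,m^{n-i})}(-x)^i`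
satisfy that `ψ·Q - P` has vanishing coefficients in degrees `0,…,m+n`. -/
theorem stmt5 (m n : ℕ) (p : ℤ → ℂ) (hp0 : p 0 = 1)
    (hpneg : ∀ i : ℤ, i < 0 → p i = 0) :
    ∀ d : ℕ, d ≤ m + n →
      (∑ i ∈ Finset.range (n + 1),
          ((-1 : ℂ) ^ i * jacobiTrudi p n (fun k => if (k : ℕ) < i then m + 1 else m)) *
            p ((d : ℤ) - (i : ℤ))) =
        (if d ≤ m then jacobiTrudi p (n + 1) (fun k => if (k : ℕ) < n then m else d)
          else 0) :=
  stmt5_general m n p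
end

section
/- With notation as in the Jacobi-Trudi Padé construction (p_k the coefficients of a formal power series with p_0=1), the polynomial P(x) = ∑_{i=0}^m s_{(m^n,i)} x^i satisfies P(x) = x^m · det( q_{m - i + j} )_{i,j=1}^{n+1}, where q_r = ∑_{j=0}^{r} x^{-j} p_{r-j}; that is, P equals x^m times the Schur determinant s_{(m^{n+1})} with each p_i replaced by ∑_{j=0}^{i} x^{-j} p_{i-j}. -/
/-!
Since `q_r = p_r + x⁻¹ q_{r-1}` for every integer `r`, subtracting `x⁻¹` times each row of
`(q_{m-i+j})` from the row above it leaves the determinant unchanged and produces the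
Jacobi–Trudi matrix of `(m^n)` followed by the row `(q_{m-n+j})_j`. Expanding
`q_{m-n+j} = ∑_{s=0}^{m} x^{-s} p_{m-n+j-s}` and using linearity of the determinant in that row
gives `det (q_{m-i+j}) = ∑_{s=0}^{m} x^{-s} s_{(m^n, m-s)}`.
-/

open scoped BigOperators

open Finset

namespace Matrix

variable {R : Type*} [CommRing R]

theorem det_eq_of_forall_row_eq_smul_add_succ {n : ℕ} {A B : Matrix (Fin (n + 1)) (Fin (n + 1)) R}
    (c : Fin n → R) (A_last : ∀ j, A (Fin.last n) j = B (Fin.last n) j)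
    (A_castSucc : ∀ (i : Fin n) (j), A i.castSucc j = B i.castSucc j + c i * A i.succ j) :
    det A = det B := by
  rw [← det_submatrix_equiv_self Fin.revPerm A, ← det_submatrix_equiv_self Fin.revPerm B]
  refine det_eq_of_forall_row_eq_smul_add_pred (fun i => c i.rev) (fun j => ?_) fun i j => ?_
  · simpa using A_last _
  · simpa [Fin.rev_succ, Fin.rev_castSucc] using A_castSucc i.rev j.rev

theorem det_updateRow_sum_smul {n ι : Type*} [Fintype n] [DecidableEq n] (M : Matrix n n R)
    (r : n) (s : Finset ι) (c : ι → R) (v : ι → n → R) :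
    (M.updateRow r (∑ i ∈ s, c i • v i)).det = ∑ i ∈ s, c i * (M.updateRow r (v i)).det := by
  simp only [← det_updateRow_smul]
  exact (detRowAlternating : (n → R) [⋀^n]→ₗ[R] R).map_update_sum s r _ M

end Matrix

section TwistedCoeff

variable {K : Type*} [Field K] (x : K) {p : ℤ → K}

/-- The coefficient of `t ^ r` in `(∑ₖ p k tᵏ) / (1 - t / x)` when `p` vanishes on negatives. -/
def twistedCoeff (p : ℤ → K) (r : ℤ) : K :=
  ∑ j ∈ range (r.toNat + 1), x ^ (-(j : ℤ)) * p (r - j)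

theorem twistedCoeff_eq_sum_range (hp : ∀ i < 0, p i = 0) {r : ℤ} {N : ℕ}
    (hN : r.toNat + 1 ≤ N) :
    twistedCoeff x p r = ∑ j ∈ range N, x ^ (-(j : ℤ)) * p (r - j) := by
  refine sum_subset (range_subset_range.2 hN) fun j _ hj => ?_
  rw [mem_range, not_lt] at hj
  rw [hp _ (by omega), mul_zero]

theorem twistedCoeff_eq_add (hp : ∀ i < 0, p i = 0) (r : ℤ) :
    twistedCoeff x p r = p r + x⁻¹ * twistedCoeff x p (r - 1) := by
  rw [twistedCoeff_eq_sum_range x hp (N := r.toNat + 1 + 1) (by omega),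
    twistedCoeff_eq_sum_range x hp (N := r.toNat + 1) (by omega), sum_range_succ', mul_sum]
  simp only [Nat.cast_zero, neg_zero, zpow_zero, one_mul, sub_zero, add_comm (p r)]
  congr 1
  refine sum_congr rfl fun j _ => ?_
  rw [← mul_assoc, zpow_neg, zpow_neg, zpow_natCast, zpow_natCast, pow_succ, mul_inv, mul_comm x⁻¹]
  push_cast
  congr 2
  ring

theorem det_twistedCoeff_eq_det_updateRow_last (hp : ∀ i < 0, p i = 0) (n : ℕ) (a : ℤ) :
    (Matrix.of fun i j : Fin (n + 1) => twistedCoeff x p (a - i + j)).det =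
      ((Matrix.of fun i j : Fin (n + 1) => p (a - i + j)).updateRow (Fin.last n)
        fun j => twistedCoeff x p (a - n + j)).det := by
  refine Matrix.det_eq_of_forall_row_eq_smul_add_succ (fun _ => x⁻¹) (fun j => ?_) fun i j => ?_
  · simp
  · rw [Matrix.updateRow_ne (Fin.castSucc_lt_last i).ne, Matrix.of_apply, Matrix.of_apply,
      twistedCoeff_eq_add x hp]
    congr 3
    simp only [Fin.val_succ, Fin.val_castSucc]
    push_cast
    ring

end TwistedCoeff

theorem jacobiTrudi_eq_det_updateRow_last (p : ℤ → ℂ) (m n i : ℕ) :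
    jacobiTrudi p (n + 1) (fun k => if (k : ℕ) < n then m else i) =
      ((Matrix.of fun k j : Fin (n + 1) => p (m - k + j)).updateRow (Fin.last n)
        fun j => p (i - n + j)).det := by
  unfold jacobiTrudi
  congr 1
  ext k j
  rcases Fin.eq_castSucc_or_eq_last k with ⟨k, rfl⟩ | rfl <;> simp

theorem stmt6_general (m n : ℕ) (p : ℤ → ℂ)
    (hpneg : ∀ i : ℤ, i < 0 → p i = 0) (x : ℂ) (hx : x ≠ 0) :
    let qq : ℤ → ℂ := fun r =>
      ∑ j ∈ Finset.range (r.toNat + 1), x ^ (-(j : ℤ)) * p (r - (j : ℤ))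
    (∑ i ∈ Finset.range (m + 1),
        jacobiTrudi p (n + 1) (fun k => if (k : ℕ) < n then m else i) * x ^ i) =
      x ^ m * Matrix.det (Matrix.of fun i j : Fin (n + 1) =>
        qq ((m : ℤ) - ((i : ℕ) : ℤ) + ((j : ℕ) : ℤ))) := by
  change _ = x ^ m * (Matrix.of fun i j : Fin (n + 1) => twistedCoeff x p (m - i + j)).det
  have last_row : (fun j : Fin (n + 1) => twistedCoeff x p (m - n + j)) =
      ∑ s ∈ range (m + 1), x ^ (-(s : ℤ)) • fun j : Fin (n + 1) => p (m - n + j - s) := by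
    ext j
    rw [twistedCoeff_eq_sum_range x hpneg (N := m + 1) (by have := j.isLt; omega)]
    simp [Finset.sum_apply]
  rw [det_twistedCoeff_eq_det_updateRow_last x hpneg, last_row, Matrix.det_updateRow_sum_smul,
    mul_sum, ← sum_range_reflect]
  refine sum_congr rfl fun s hs => ?_
  have hsm : s ≤ m := Nat.lt_succ_iff.mp (mem_range.mp hs)
  rw [Nat.add_sub_cancel, jacobiTrudi_eq_det_updateRow_last, ← mul_assoc, mul_comm]
  congr 1
  · rw [← zpow_natCast, ← zpow_natCast, ← zpow_add₀ hx, ← sub_eq_add_neg, Nat.cast_sub hsm]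
  · congr 2
    ext j
    push_cast [hsm]
    congr 1
    ring

/-- `P(x) = ∑_{i=0}^m s_{(m^n,i)} x^i` equals `x^m` times the Schur determinant
`s_{(m^{n+1})}` with each `p_i` replaced by `q_i = ∑_{j=0}^i x^{-j} p_{i-j}`. -/
theorem stmt6 (m n : ℕ) (p : ℤ → ℂ) (hp0 : p 0 = 1)
    (hpneg : ∀ i : ℤ, i < 0 → p i = 0) (x : ℂ) (hx : x ≠ 0) :
    let qq : ℤ → ℂ := fun r =>
      ∑ j ∈ Finset.range (r.toNat + 1), x ^ (-(j : ℤ)) * p (r - (j : ℤ))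
    (∑ i ∈ Finset.range (m + 1),
        jacobiTrudi p (n + 1) (fun k => if (k : ℕ) < n then m else i) * x ^ i) =
      x ^ m * Matrix.det (Matrix.of fun i j : Fin (n + 1) =>
        qq ((m : ℤ) - ((i : ℕ) : ℤ) + ((j : ℕ) : ℤ))) :=
  stmt6_general m n p hpneg x hx
end

section
/- With p_k the coefficients of a formal power series with p_0=1, the polynomial Q(x) = ∑_{i=0}^{n} s_{((m+1)^i, m^{n-i})} (-x)^i satisfies Q(x) = (-x)^n · det( r_{m+1 - i + j} )_{i,j=1}^{n}, where r_k = p_k − x^{-1} p_{k-1}; that is, Q equals (-x)^n times the Schur determinant s_{((m+1)^n)} with each p_i replaced by p_i − x^{-1} p_{i-1}. -/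
/-!
Write `a_k` for the row `j ↦ p (m + 1 - k + j)`. Row `k` of the Jacobi–Trudi matrix of
`((m+1)^i, m^(n-i))` is `a_k` for `k < i` and `a_{k+1}` for `k ≥ i`, while row `k` of the
`r`-matrix is `a_k - x⁻¹ a_{k+1}`. Expand the latter determinant multilinearly over the set `s`
of rows where `a_k` is chosen: a term vanishes as soon as `k ∉ s` and `k + 1 ∈ s`, since rows
`k` and `k + 1` are then both `a_{k+1}`. The surviving sets are the initial segments `{k < i}`, and
they contribute `(-x⁻¹)^(n-i) s_{((m+1)^i, m^(n-i))}`.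
-/

open scoped BigOperators

open Finset

namespace Fin

variable {n : ℕ}

theorem mem_of_le_of_mem_of_pred_mem {s : Finset (Fin n)}
    (hs : ∀ k l : Fin n, (l : ℕ) = k + 1 → l ∈ s → k ∈ s) {k l : Fin n} (hkl : k ≤ l)
    (hl : l ∈ s) : k ∈ s := by
  obtain ⟨d, hd⟩ := Nat.exists_eq_add_of_le hkl
  induction d generalizing l with
  | zero => exact Fin.ext hd ▸ hl
  | succ d ih =>
    have hlt : (k : ℕ) + d < n := by omega
    exact ih (l := ⟨k + d, hlt⟩) (Fin.mk_le_mk.mpr (by omega)) (hs _ l hd hl) rfl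

theorem eq_filter_val_lt_card_of_pred_mem {s : Finset (Fin n)}
    (hs : ∀ k l : Fin n, (l : ℕ) = k + 1 → l ∈ s → k ∈ s) :
    s = ({k | (k : ℕ) < #s} : Finset (Fin n)) := by
  ext k
  have := lt_card_filter_univ_iff_apply_of_imp (j := k) (· ∈ s)
    fun _ _ hji hi => mem_of_le_of_mem_of_pred_mem hs hji hi
  rw [filter_univ_mem] at this
  simp [this]

end Fin

namespace Matrix

variable {R : Type*} [CommRing R]

theorem det_of_add_smul_eq_sum {ι : Type*} [Fintype ι] [DecidableEq ι] (M N : ι → ι → R)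
    (c : R) :
    det (of (M + c • N)) =
      ∑ s : Finset ι,
        c ^ (Fintype.card ι - #s) * det (of fun i => if i ∈ s then M i else N i) := by
  refine (detRowAlternating.toMultilinearMap.map_add_univ M (c • N)).trans
    (sum_congr rfl fun s _ => ?_)
  have hpiece : s.piecewise M (c • N) = sᶜ.piecewise
      (fun i => c • if i ∈ s then M i else N i) (fun i => if i ∈ s then M i else N i) := by
    ext i : 1
    by_cases hi : i ∈ s <;> simp [hi]
  rw [hpiece, MultilinearMap.map_piecewise_smul, prod_const, card_compl, smul_eq_mul]
  rfl

variable {n : ℕ}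

theorem det_of_ite_mem_eq_zero_of_row_succ {M N : Fin n → Fin n → R}
    (hMN : ∀ k l : Fin n, (l : ℕ) = k + 1 → N k = M l) {s : Finset (Fin n)} {k l : Fin n}
    (hkl : (l : ℕ) = k + 1) (hk : k ∉ s) (hl : l ∈ s) :
    det (of fun i => if i ∈ s then M i else N i) = 0 := by
  refine det_zero_of_row_eq (i := k) (j := l) (fun h => by simp [h] at hkl) ?_
  ext j
  simp [hk, hl, hMN k l hkl]

theorem det_of_add_smul_of_row_succ {M N : Fin n → Fin n → R}
    (hMN : ∀ k l : Fin n, (l : ℕ) = k + 1 → N k = M l) (c : R) :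
    det (of (M + c • N)) = ∑ i ∈ range (n + 1),
      c ^ (n - i) * det (of fun k : Fin n => if (k : ℕ) < i then M k else N k) := by
  rw [det_of_add_smul_eq_sum, Fintype.card_fin,
    ← sum_fiberwise_of_maps_to (g := card) (t := range (n + 1))
      fun s _ => mem_range_succ_iff.mpr (by simpa using card_le_univ s)]
  refine sum_congr rfl fun i hi => ?_
  have hcard : #{k : Fin n | (k : ℕ) < i} = i := by
    rw [Fin.card_filter_val_lt, min_eq_right (mem_range_succ_iff.mp hi)]
  rw [sum_eq_single_of_mem ({k | (k : ℕ) < i} : Finset (Fin n)) (by simp [hcard]) ?_]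
  · rw [hcard]
    congr 3
    ext k : 1
    by_cases hk : (k : ℕ) < i <;> simp [hk]
  · intro s hs hne
    simp only [mem_filter, mem_univ, true_and] at hs
    by_contra hdet
    refine hne (hs ▸ Fin.eq_filter_val_lt_card_of_pred_mem fun k l hkl hl => ?_)
    by_contra hk
    exact hdet (mul_eq_zero_of_right _ (det_of_ite_mem_eq_zero_of_row_succ hMN hkl hk hl))

end Matrix

theorem stmt7_general (m n : ℕ) (p : ℤ → ℂ) (x : ℂ) (hx : x ≠ 0) :
    let rr : ℤ → ℂ := fun k => p k - x⁻¹ * p (k - 1)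
    (∑ i ∈ Finset.range (n + 1),
        jacobiTrudi p n (fun k => if (k : ℕ) < i then m + 1 else m) * (-x) ^ i) =
      (-x) ^ n * Matrix.det (Matrix.of fun i j : Fin n =>
        rr ((m : ℤ) + 1 - ((i : ℕ) : ℤ) + ((j : ℕ) : ℤ))) := by
  intro rr
  set A : Fin n → Fin n → ℂ := fun k j => p ((m : ℤ) + 1 - (k : ℕ) + (j : ℕ))
  set B : Fin n → Fin n → ℂ := fun k j => p ((m : ℤ) - (k : ℕ) + (j : ℕ))
  have hAB : ∀ k l : Fin n, (l : ℕ) = k + 1 → B k = A l := by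
    intro k l hkl
    ext j
    simp only [A, B, hkl]
    congr 1
    push_cast
    ring
  have hrr : (Matrix.of fun i j : Fin n => rr ((m : ℤ) + 1 - (i : ℕ) + (j : ℕ))) =
      Matrix.of (A + (-x⁻¹) • B) := by
    ext i j
    simp only [rr, A, B, Matrix.of_apply, Pi.add_apply, Pi.smul_apply, smul_eq_mul]
    ring_nf
  have hjt : ∀ i, jacobiTrudi p n (fun k => if (k : ℕ) < i then m + 1 else m) =
      Matrix.det (Matrix.of fun k : Fin n => if (k : ℕ) < i then A k else B k) := by
    intro i
    unfold jacobiTrudi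
    congr 1
    ext k j
    by_cases hk : (k : ℕ) < i <;> simp [hk, A, B]
  rw [hrr, Matrix.det_of_add_smul_of_row_succ hAB, Finset.mul_sum]
  refine Finset.sum_congr rfl fun i hi => ?_
  have hx' : -x ≠ 0 := neg_ne_zero.mpr hx
  rw [hjt, ← mul_assoc, neg_inv, inv_pow_sub₀ hx' (Finset.mem_range_succ_iff.mp hi),
    mul_inv_cancel_left₀ (pow_ne_zero _ hx'), mul_comm]

/-- `Q(x) = ∑_{i=0}^n s_{((m+1)^i,m^{n-i})} (-x)^i` equals `(-x)^n` times the Schur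
determinant `s_{((m+1)^n)}` with each `p_i` replaced by `r_i = p_i - x⁻¹ p_{i-1}`. -/
theorem stmt7 (m n : ℕ) (p : ℤ → ℂ) (hp0 : p 0 = 1)
    (hpneg : ∀ i : ℤ, i < 0 → p i = 0) (x : ℂ) (hx : x ≠ 0) :
    let rr : ℤ → ℂ := fun k => p k - x⁻¹ * p (k - 1)
    (∑ i ∈ Finset.range (n + 1),
        jacobiTrudi p n (fun k => if (k : ℕ) < i then m + 1 else m) * (-x) ^ i) =
      (-x) ^ n * Matrix.det (Matrix.of fun i j : Fin n =>
        rr ((m : ℤ) + 1 - ((i : ℕ) : ℤ) + ((j : ℕ) : ℤ))) :=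
  stmt7_general m n p x hx
end

section
/- Given the Casorati determinant factorizations D_1(x) = w_0 ψ(x) x^{m+n+1} F(f,x)/A(x), D_2(x) = w_1 ψ(x) x^{m+n+1}/(1−a_1 x), D_3(x) = w_1 ψ(x) x^{m+n+1} (1−b_1 x) G(g,x)/A(x), where A(x)=∏_{i=1}^{N+1}(1−a_i x), the first relation is equivalent to the statement: the expression B(x)P(x)Q(qx) − A(x)P(qx)Q(x), where B(x)=∏_{i=1}^{N+1}(1−b_i x), P, Q are polynomials of degrees m, n with ψ(x)Q(x) − P(x) = O(x^{m+n+1}), is a polynomial of degree at most m+n+N+1 divisible by x^{m+n+1}; i.e., B(x)P(x)Q(qx) − A(x)P(qx)Q(x) = x^{m+n+1}·(polynomial of degree ≤ N). -/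
open Polynomial

/-!
With `P_q(x) = P(qx)` and `Q_q(x) = Q(qx)`, the functional equation `ψ(qx) A(x) = ψ(x) B(x)`
turns the Casoratian into a combination of Padé remainders,
`B P Q_q - A P_q Q = B Q_q (P - ψ Q) + A Q (ψ(qx) Q_q - P_q)`,
and both `ψ Q - P` and its rescaling are divisible by `x^{m+n+1}`. Since the Casoratian has
degree at most `(N + 1) + m + n`, the quotient has degree at most `N`.
-/

namespace PowerSeries

theorem X_pow_dvd_rescale {R : Type*} [CommSemiring R] {f : PowerSeries R} {k : ℕ} (r : R)
    (h : X ^ k ∣ f) : X ^ k ∣ rescale r f := by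
  rw [X_pow_dvd_iff] at h ⊢
  intro d hd
  rw [coeff_rescale, h d hd, mul_zero]

end PowerSeries

namespace Polynomial

variable {R : Type*}

theorem coe_comp_C_mul_X [CommSemiring R] (p : R[X]) (r : R) :
    ((p.comp (C r * X) : R[X]) : PowerSeries R) = PowerSeries.rescale r (p : PowerSeries R) := by
  ext n
  rw [coeff_coe, PowerSeries.coeff_rescale, coeff_coe, comp_C_mul_X_coeff, mul_comm]

theorem natDegree_comp_C_mul_X_le [CommSemiring R] (p : R[X]) (r : R) :
    (p.comp (C r * X)).natDegree ≤ p.natDegree :=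
  natDegree_le_iff_coeff_eq_zero.mpr fun n hn => by
    rw [comp_C_mul_X_coeff, coeff_eq_zero_of_natDegree_lt hn, zero_mul]

theorem natDegree_prod_one_sub_C_mul_X_le [CommRing R] {ι : Type*} (s : Finset ι) (c : ι → R) :
    (∏ i ∈ s, (1 - C (c i) * X)).natDegree ≤ s.card := by
  refine (natDegree_prod_le _ _).trans ?_
  rw [Finset.card_eq_sum_ones]
  exact Finset.sum_le_sum fun i _ => by compute_degree

theorem X_pow_dvd_coe_iff [Semiring R] {p : R[X]} {k : ℕ} :
    (PowerSeries.X : PowerSeries R) ^ k ∣ (p : PowerSeries R) ↔ X ^ k ∣ p := by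
  simp [PowerSeries.X_pow_dvd_iff, Polynomial.X_pow_dvd_iff]

theorem degree_le_of_eq_X_pow_mul [Semiring R] [Nontrivial R] {D F : R[X]} {k N : ℕ}
    (hD : D = X ^ k * F) (hdeg : D.natDegree ≤ k + N) : F.degree ≤ N := by
  rcases eq_or_ne F 0 with rfl | hF
  · simp
  · rw [hD, natDegree_X_pow_mul _ hF] at hdeg
    exact degree_le_of_natDegree_le (by omega)

section Casoratian

variable [CommRing R] {A B P Q : R[X]} {q : R}

theorem coe_casoratian_eq {ψ : PowerSeries R}
    (hfunc : PowerSeries.rescale q ψ * (A : PowerSeries R) = ψ * (B : PowerSeries R)) :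
    ((B * P * Q.comp (C q * X) - A * P.comp (C q * X) * Q : R[X]) : PowerSeries R) =
      B * PowerSeries.rescale q (Q : PowerSeries R) * ((P : PowerSeries R) - ψ * Q) +
        A * Q * PowerSeries.rescale q (ψ * (Q : PowerSeries R) - P) := by
  simp only [coe_sub, coe_mul, coe_comp_C_mul_X, map_sub, map_mul]
  linear_combination (-((Q : PowerSeries R) * PowerSeries.rescale q (Q : PowerSeries R))) * hfunc

theorem X_pow_dvd_casoratian {ψ : PowerSeries R} {k : ℕ}
    (hfunc : PowerSeries.rescale q ψ * (A : PowerSeries R) = ψ * (B : PowerSeries R))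
    (hpade : PowerSeries.X ^ k ∣ ψ * (Q : PowerSeries R) - (P : PowerSeries R)) :
    X ^ k ∣ B * P * Q.comp (C q * X) - A * P.comp (C q * X) * Q := by
  rw [← X_pow_dvd_coe_iff, coe_casoratian_eq hfunc]
  refine dvd_add (Dvd.dvd.mul_left ?_ _)
    (Dvd.dvd.mul_left (PowerSeries.X_pow_dvd_rescale q hpade) _)
  simpa using hpade.neg_right

theorem natDegree_casoratian_le {d m n : ℕ} (hA : A.natDegree ≤ d) (hB : B.natDegree ≤ d)
    (hP : P.natDegree ≤ m) (hQ : Q.natDegree ≤ n) :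
    (B * P * Q.comp (C q * X) - A * P.comp (C q * X) * Q).natDegree ≤ d + m + n := by
  have hQq := (natDegree_comp_C_mul_X_le Q q).trans hQ
  have hPq := (natDegree_comp_C_mul_X_le P q).trans hP
  simpa using natDegree_sub_le_of_le (natDegree_mul_le_of_le (natDegree_mul_le_of_le hB hP) hQq)
    (natDegree_mul_le_of_le (natDegree_mul_le_of_le hA hPq) hQ)

end Casoratian

end Polynomial

/-- Given the Padé condition `ψ(x)Q(x) - P(x) = O(x^{m+n+1})` and the functional
equation `ψ(qx) A(x) = ψ(x) B(x)` with `A(x) = ∏(1-a_i x)`, `B(x) = ∏(1-b_i x)`,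
the Casoratian `B(x)P(x)Q(qx) - A(x)P(qx)Q(x)` equals `x^{m+n+1}` times a
polynomial of degree at most `N`. -/
theorem stmt17 (N m n : ℕ) (q : ℂ) (a b : Fin (N + 1) → ℂ)
    (P Q : Polynomial ℂ) (hP : P.degree ≤ m) (hQ : Q.degree ≤ n)
    (ψ : PowerSeries ℂ)
    (hfunc : (PowerSeries.rescale q ψ) *
        ((∏ i, (1 - Polynomial.C (a i) * Polynomial.X) : Polynomial ℂ) : PowerSeries ℂ) =
      ψ * ((∏ i, (1 - Polynomial.C (b i) * Polynomial.X) : Polynomial ℂ) : PowerSeries ℂ))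
    (hpade : ∀ d : ℕ, d ≤ m + n →
      PowerSeries.coeff d (ψ * (Q : PowerSeries ℂ)) =
        PowerSeries.coeff d (P : PowerSeries ℂ)) :
    ∃ R : Polynomial ℂ, R.degree ≤ N ∧
      (∏ i, (1 - Polynomial.C (b i) * Polynomial.X)) * P *
            (Q.comp (Polynomial.C q * Polynomial.X)) -
          (∏ i, (1 - Polynomial.C (a i) * Polynomial.X)) *
            (P.comp (Polynomial.C q * Polynomial.X)) * Q =
        Polynomial.X ^ (m + n + 1) * R := by
  have hrem : PowerSeries.X ^ (m + n + 1) ∣ ψ * (Q : PowerSeries ℂ) - (P : PowerSeries ℂ) :=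
    PowerSeries.X_pow_dvd_iff.mpr fun d hd => by
      rw [map_sub, hpade d (by omega), sub_self]
  obtain ⟨R, hR⟩ := X_pow_dvd_casoratian hfunc hrem
  refine ⟨R, degree_le_of_eq_X_pow_mul hR ?_, hR⟩
  have hdeg := natDegree_casoratian_le (q := q)
    ((natDegree_prod_one_sub_C_mul_X_le _ a).trans_eq (Finset.card_fin _))
    ((natDegree_prod_one_sub_C_mul_X_le _ b).trans_eq (Finset.card_fin _))
    (natDegree_le_of_degree_le hP) (natDegree_le_of_degree_le hQ)
  omega
end
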